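/- For a 2×2 density matrix ρ with eigenvalues λ₁, λ₂ and eigenvectors |λ₁⟩, |λ₂⟩, and any 2×2 matrix σ, the variances of σ in the two eigenstates coincide: ⟨Δσ⟩²_{λ₁} = ⟨Δσ⟩²_{λ₂}, where ⟨Δσ⟩²_{ψ} = (1/2)⟨ψ|(σ†σ + σσ†)|ψ⟩ − |⟨ψ|σ|ψ⟩|². -/

import Mathlib

open Matrix
open scoped ComplexOrder

/-- Variance of an arbitrary operator `σ` in a pure state `ψ`:
`⟨Δσ⟩²_ψ = (1/2)⟨ψ|(σ†σ + σσ†)|ψ⟩ − |⟨ψ|σ|ψ⟩|²`. -/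
noncomputable def varVec {d : ℕ} (ψ : Fin d → ℂ) (σ : Matrix (Fin d) (Fin d) ℂ) : ℂ :=
  (1 / 2 : ℂ) * (star ψ ⬝ᵥ ((σᴴ * σ + σ * σᴴ) *ᵥ ψ)) -
    (‖star ψ ⬝ᵥ (σ *ᵥ ψ)‖ : ℂ) ^ 2

/-!
Write `σᵢⱼ = ⟨uᵢ|σ|uⱼ⟩` in an orthonormal basis `(uᵢ)`. By Parseval,
`⟨uₖ|σ†σ|uₖ⟩ = Σᵢ |σᵢₖ|²` and `⟨uₖ|σσ†|uₖ⟩ = Σᵢ |σₖᵢ|²`, so the variance in `uₖ` is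
`½ Σ_{i ≠ k} (|σᵢₖ|² + |σₖᵢ|²)`. In dimension two both basis vectors give `½ (|σ₁₂|² + |σ₂₁|²)`.
-/

namespace Matrix

theorem dotProduct_star_conjTranspose_mulVec {m n R : Type*} [Fintype m] [Fintype n]
    [NonUnitalSemiring R] [StarRing R] (M : Matrix m n R) (v : n → R) (w : m → R) :
    star v ⬝ᵥ (Mᴴ *ᵥ w) = star (M *ᵥ v) ⬝ᵥ w := by
  rw [dotProduct_mulVec, star_mulVec]

theorem dotProduct_star_conjTranspose_mul_mulVec_self {m n R : Type*} [Fintype m] [Fintype n]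
    [NonUnitalSemiring R] [StarRing R] (M : Matrix m n R) (v : n → R) :
    star v ⬝ᵥ ((Mᴴ * M) *ᵥ v) = star (M *ᵥ v) ⬝ᵥ (M *ᵥ v) := by
  rw [← mulVec_mulVec, dotProduct_star_conjTranspose_mulVec]

variable {n : Type*} [Fintype n] [DecidableEq n] {u : n → n → ℂ}

theorem sum_dotProduct_mul_dotProduct_of_orthonormal
    (hu : ∀ i j, star (u i) ⬝ᵥ u j = (1 : Matrix n n ℂ) i j) (v w : n → ℂ) :
    ∑ i, (star v ⬝ᵥ u i) * (star (u i) ⬝ᵥ w) = star v ⬝ᵥ w := by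
  set B : Matrix n n ℂ := (of u)ᵀ
  have hBB : B * Bᴴ = 1 := mul_eq_one_comm.mp <| by
    ext i j
    simpa [B, mul_apply, dotProduct] using hu i j
  calc ∑ i, (star v ⬝ᵥ u i) * (star (u i) ⬝ᵥ w) = (star v ᵥ* B) ⬝ᵥ (Bᴴ *ᵥ w) := rfl
    _ = star v ⬝ᵥ w := by rw [← dotProduct_mulVec, mulVec_mulVec, hBB, one_mulVec]

theorem dotProduct_star_self_eq_sum_norm_sq_of_orthonormal
    (hu : ∀ i j, star (u i) ⬝ᵥ u j = (1 : Matrix n n ℂ) i j) (v : n → ℂ) :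
    star v ⬝ᵥ v = ∑ i, (‖star (u i) ⬝ᵥ v‖ : ℂ) ^ 2 := by
  rw [← sum_dotProduct_mul_dotProduct_of_orthonormal hu]
  refine Finset.sum_congr rfl fun i _ => ?_
  rw [star_dotProduct v (u i), ← Complex.conj_mul']
  rfl

end Matrix

section

variable {d : ℕ} {u : Fin d → Fin d → ℂ}

theorem varVec_eq_of_orthonormal
    (hu : ∀ i j, star (u i) ⬝ᵥ u j = (1 : Matrix (Fin d) (Fin d) ℂ) i j)
    (σ : Matrix (Fin d) (Fin d) ℂ) (k : Fin d) :
    varVec (u k) σ = (1 / 2 : ℂ) * ∑ i, ((‖star (u i) ⬝ᵥ (σ *ᵥ u k)‖ : ℂ) ^ 2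
      + (‖star (u k) ⬝ᵥ (σ *ᵥ u i)‖ : ℂ) ^ 2) - (‖star (u k) ⬝ᵥ (σ *ᵥ u k)‖ : ℂ) ^ 2 := by
  have h₁ := dotProduct_star_conjTranspose_mul_mulVec_self σ (u k)
  have h₂ := dotProduct_star_conjTranspose_mul_mulVec_self σᴴ (u k)
  rw [conjTranspose_conjTranspose] at h₂
  rw [varVec, add_mulVec, dotProduct_add, h₁, h₂,
    dotProduct_star_self_eq_sum_norm_sq_of_orthonormal hu,
    dotProduct_star_self_eq_sum_norm_sq_of_orthonormal hu, ← Finset.sum_add_distrib]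
  congr 3 with i
  rw [dotProduct_star_conjTranspose_mulVec, star_dotProduct (σ *ᵥ u i), norm_star]

end

theorem stmt10_general (σ : Matrix (Fin 2) (Fin 2) ℂ)
    (u₁ u₂ : Fin 2 → ℂ)
    (hn₁ : star u₁ ⬝ᵥ u₁ = 1) (hn₂ : star u₂ ⬝ᵥ u₂ = 1) (ho : star u₁ ⬝ᵥ u₂ = 0) :
    varVec u₁ σ = varVec u₂ σ := by
  have hu : ∀ i j, star (![u₁, u₂] i) ⬝ᵥ ![u₁, u₂] j = (1 : Matrix (Fin 2) (Fin 2) ℂ) i j := by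
    have ho' : star u₂ ⬝ᵥ u₁ = 0 := by rw [star_dotProduct, ho, star_zero]
    intro i j
    fin_cases i <;> fin_cases j <;> simp [hn₁, hn₂, ho, ho']
  have h₁ := varVec_eq_of_orthonormal hu σ 0
  have h₂ := varVec_eq_of_orthonormal hu σ 1
  simp only [Fin.sum_univ_two, Matrix.cons_val_zero, Matrix.cons_val_one] at h₁ h₂
  rw [h₁, h₂]
  ring

theorem stmt10 (ρ σ : Matrix (Fin 2) (Fin 2) ℂ)
    (hρ : ρ.PosSemidef) (htr : ρ.trace = 1)
    (u₁ u₂ : Fin 2 → ℂ) (l₁ l₂ : ℝ)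
    (hn₁ : star u₁ ⬝ᵥ u₁ = 1) (hn₂ : star u₂ ⬝ᵥ u₂ = 1) (ho : star u₁ ⬝ᵥ u₂ = 0)
    (he₁ : ρ *ᵥ u₁ = (l₁ : ℂ) • u₁) (he₂ : ρ *ᵥ u₂ = (l₂ : ℂ) • u₂) :
    varVec u₁ σ = varVec u₂ σ :=
  stmt10_general σ u₁ u₂ hn₁ hn₂ ho
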